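/- For the two-contact frictionless system with J = I₂ (identity), for every ε > 0 the velocity v_ε = (1+ε)·(−1, −ε) is actively penetrating (both coordinates negative), and the derivative choice v̇_ε = (ε, 1)/(1+ε), which is a convex combination with weights (ε/(1+ε), 1/(1+ε)) of the two contact forces e₁ and e₂, satisfies v̇_εᵀ v_ε ≥ −2ε; hence no uniform bound d/ds(½‖v‖²) ≤ −δ < 0 holds over the active set. -/

import Mathlib

noncomputable def e2 (x y : ℝ) : EuclideanSpace ℝ (Fin 2) :=
  (WithLp.equiv 2 (Fin 2 → ℝ)).symm ![x, y]

lemma e2_apply0 (x y : ℝ) : e2 x y 0 = x := rfl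
lemma e2_apply1 (x y : ℝ) : e2 x y 1 = y := rfl

lemma inner_e2 (a b c d : ℝ) : (inner ℝ (e2 a b) (e2 c d) : ℝ) = a * c + b * d := by
  simp [e2, PiLp.inner_apply, Fin.sum_univ_two]; ring

lemma inner_calc (ε : ℝ) (hε : (1:ℝ) + ε ≠ 0) :
    (inner ℝ ((1 / (1 + ε)) • e2 ε 1) ((1 + ε) • e2 (-1) (-ε)) : ℝ) = -(2 * ε) := by
  rw [real_inner_smul_left, inner_smul_right, inner_e2]
  field_simp
  ring

/-- No uniform instantaneous dissipation bound (counterexample with `J = I₂`):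
for every `ε > 0`, the velocity `v_ε = (1+ε)(-1,-ε)` is actively penetrating,
the derivative `v̇_ε = (ε,1)/(1+ε)` is a convex combination of the two contact
forces `e₁, e₂` with weights `(ε/(1+ε), 1/(1+ε))`, and `v̇_εᵀ v_ε ≥ -2ε`; hence
there is no `δ > 0` with `v̇_εᵀ v_ε ≤ -δ` uniformly over the active set. -/
theorem no_uniform_dissipation_bound :
    (∀ ε : ℝ, 0 < ε →
      ((1 + ε) • e2 (-1) (-ε)) 0 < 0 ∧ ((1 + ε) • e2 (-1) (-ε)) 1 < 0 ∧
      (1 / (1 + ε)) • e2 ε 1 =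
        (ε / (1 + ε)) • e2 1 0 + (1 / (1 + ε)) • e2 0 1 ∧
      ε / (1 + ε) + 1 / (1 + ε) = 1 ∧
      (inner ℝ ((1 / (1 + ε)) • e2 ε 1) ((1 + ε) • e2 (-1) (-ε)) : ℝ) ≥ -(2 * ε)) ∧
    ¬ ∃ δ > (0 : ℝ), ∀ ε : ℝ, 0 < ε →
      (inner ℝ ((1 / (1 + ε)) • e2 ε 1) ((1 + ε) • e2 (-1) (-ε)) : ℝ) ≤ -δ := by
  have key : ∀ ε : ℝ, 0 < ε →
      (inner ℝ ((1 / (1 + ε)) • e2 ε 1) ((1 + ε) • e2 (-1) (-ε)) : ℝ) = -(2 * ε) := by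
    intro ε hε
    exact inner_calc ε (by linarith)
  constructor
  · intro ε hε
    have h1 : (0:ℝ) < 1 + ε := by linarith
    refine ⟨?_, ?_, ?_, ?_, (key ε hε).ge⟩
    · show (1 + ε) * (e2 (-1) (-ε) 0) < 0
      rw [e2_apply0]; nlinarith
    · show (1 + ε) * (e2 (-1) (-ε) 1) < 0
      rw [e2_apply1]; nlinarith
    · apply (WithLp.equiv 2 (Fin 2 → ℝ)).injective
      funext i
      fin_cases i <;>
        simp [e2, WithLp.ofLp_smul, WithLp.ofLp_add] <;> field_simp
    · field_simp; ring
  · rintro ⟨δ, hδ, h⟩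
    have := h (δ/4) (by linarith)
    rw [key (δ/4) (by linarith)] at this
    linarith
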